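/- arXiv:2512.11803 — 3 statements merged into one kernel-verified Lean document; each statement's English description precedes it below -/
import Mathlib

section
/- Consider the additive group (ℝ,+). For every real number c with c ∉ ℤ, the spectre of the set ℤ ∪ {c} is S(ℤ ∪ {c}) = {0}, while S(ℤ) = ℤ. In particular, taking c_n = 1 − 1/n for n ≥ 2, the sets ℤ ∪ {c_n} converge to ℤ in the Hausdorff distance, but S(ℤ ∪ {c_n}) = {0} does not converge to S(ℤ) = ℤ. -/
open Filter

/-- The spectre of a set `A` in an abelian group. -/
def spectre {X : Type*} [AddCommGroup X] (A : Set X) : Set X :=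
  {z | ∀ x ∈ A, x + z ∈ A ∨ x - z ∈ A}

/-- The set of integers inside `ℝ`. -/
def intR : Set ℝ := Set.range ((↑) : ℤ → ℝ)

/-!
A subgroup `H` is its own spectre. After adjoining a point `c ∉ H`, testing `z` at `x = 0`
forces `±z ∈ H` or `±z = c`, and the spectre is symmetric. In the first case, testing at
`x = c` gives `z = 0`, because `c ± z ∈ H` would put `c` in `H`. In the second case `c` itself
lies in the spectre, which a test at any `a ∈ H` with `a ≠ 0` and `a ≠ 2c` rules out; for
`ℤ ⊆ ℝ` take `a = 2`. The Hausdorff distance from `ℤ ∪ {c}` to `ℤ` is the distance from `c`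
to `ℤ`, which tends to `0` along `c = 1 - 1/n`.
-/

open Metric

section Spectre

variable {X : Type*} [AddCommGroup X]

lemma zero_mem_spectre (A : Set X) : (0 : X) ∈ spectre A :=
  fun x hx => Or.inl (by simpa using hx)

lemma neg_mem_spectre {A : Set X} {z : X} (hz : z ∈ spectre A) : -z ∈ spectre A := by
  intro x hx
  rw [← sub_eq_add_neg, sub_neg_eq_add]
  exact (hz x hx).symm

lemma mem_or_neg_mem_of_mem_spectre {A : Set X} (h0 : (0 : X) ∈ A) {z : X}
    (hz : z ∈ spectre A) : z ∈ A ∨ -z ∈ A := by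
  simpa using hz 0 h0

lemma spectre_addSubgroup (H : AddSubgroup X) : spectre (H : Set X) = H := by
  ext z
  refine ⟨fun hz => ?_, fun hz x hx => Or.inl (H.add_mem hx hz)⟩
  rcases mem_or_neg_mem_of_mem_spectre H.zero_mem hz with h | h
  · exact h
  · exact H.neg_mem_iff.mp h

variable {H : AddSubgroup X} {a c z : X}

lemma eq_zero_of_mem_spectre_union_singleton (hc : c ∉ H)
    (hz : z ∈ spectre ((H : Set X) ∪ {c})) (hzH : z ∈ H) : z = 0 := by
  rcases hz c (Or.inr rfl) with (h | h) | (h | h)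
  · exact absurd (by simpa using H.sub_mem h hzH) hc
  · simpa using h
  · exact absurd (by simpa using H.add_mem h hzH) hc
  · simpa using h

lemma notMem_spectre_union_singleton (hc : c ∉ H) (ha : a ∈ H) (ha0 : a ≠ 0)
    (hac : a ≠ c + c) : c ∉ spectre ((H : Set X) ∪ {c}) := by
  intro hcS
  rcases hcS a (Or.inl ha) with (h | h) | (h | h)
  · exact hc (by simpa using H.sub_mem h ha)
  · exact ha0 (by simpa using h)
  · exact hc (by simpa using H.sub_mem ha h)
  · exact hac (sub_eq_iff_eq_add.mp h)

theorem spectre_union_singleton (hc : c ∉ H) (ha : a ∈ H) (ha0 : a ≠ 0) (hac : a ≠ c + c) :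
    spectre ((H : Set X) ∪ {c}) = {0} := by
  refine Set.eq_singleton_iff_unique_mem.mpr ⟨zero_mem_spectre _, fun z hz => ?_⟩
  have hcS := notMem_spectre_union_singleton hc ha ha0 hac
  rcases mem_or_neg_mem_of_mem_spectre (Set.mem_union_left _ H.zero_mem) hz with
    (hzH | rfl) | (hzH | hzc)
  · exact eq_zero_of_mem_spectre_union_singleton hc hz hzH
  · exact absurd hz hcS
  · exact neg_eq_zero.mp (eq_zero_of_mem_spectre_union_singleton hc (neg_mem_spectre hz) hzH)
  · obtain rfl := Set.mem_singleton_iff.mp hzc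
    exact absurd (neg_mem_spectre hz) hcS

end Spectre

lemma hausdorffEDist_union_singleton {α : Type*} [PseudoEMetricSpace α] (s : Set α) (c : α) :
    hausdorffEDist (s ∪ {c}) s = infEDist c s := by
  refine le_antisymm (hausdorffEDist_le_of_infEDist ?_ ?_)
    (infEDist_le_hausdorffEDist_of_mem (Set.mem_union_right _ rfl))
  · rintro x (hx | rfl)
    · exact (infEDist_zero_of_mem hx).trans_le zero_le
    · exact le_rfl
  · exact fun x hx => (infEDist_zero_of_mem (Set.mem_union_left _ hx)).trans_le zero_le

lemma hausdorffEDist_singleton_ne_zero {α : Type*} [EMetricSpace α] {x y : α} {t : Set α}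
    (hx : x ∈ t) (hxy : x ≠ y) : hausdorffEDist {y} t ≠ 0 := by
  have h := infEDist_le_hausdorffEDist_of_mem (t := {y}) hx
  rw [infEDist_singleton, hausdorffEDist_comm] at h
  exact ((edist_pos.mpr hxy).trans_le h).ne'

lemma coe_range_intCastAddHom : ((Int.castAddHom ℝ).range : Set ℝ) = intR := by
  rw [AddMonoidHom.coe_range]
  rfl

lemma one_mem_intR : (1 : ℝ) ∈ intR := ⟨1, Int.cast_one⟩

lemma spectre_intR : spectre intR = intR := by
  rw [← coe_range_intCastAddHom, spectre_addSubgroup]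

lemma spectre_intR_union_singleton {c : ℝ} (hc : c ∉ intR) : spectre (intR ∪ {c}) = {0} := by
  rw [← coe_range_intCastAddHom] at hc ⊢
  refine spectre_union_singleton hc ⟨2, by simp⟩ two_ne_zero fun h => hc ⟨1, ?_⟩
  simp only [Int.coe_castAddHom, Int.cast_one]
  linarith

lemma notMem_intR_of_pos_of_lt_one {x : ℝ} (h0 : 0 < x) (h1 : x < 1) : x ∉ intR := by
  rintro ⟨m, rfl⟩
  have : (0 : ℤ) < m := by exact_mod_cast h0
  have : m < 1 := by exact_mod_cast h1
  omega

lemma one_sub_one_div_notMem_intR (n : ℕ) : 1 - 1 / (n + 2 : ℝ) ∉ intR := by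
  have hpos : 0 < 1 / (n + 2 : ℝ) := by positivity
  have hlt : 1 / (n + 2 : ℝ) < 1 := (div_lt_one (by positivity)).mpr (by linarith)
  exact notMem_intR_of_pos_of_lt_one (by linarith) (by linarith)

lemma tendsto_one_sub_one_div : Tendsto (fun n : ℕ => 1 - 1 / (n + 2 : ℝ)) atTop (nhds 1) := by
  have h : Tendsto (fun n : ℕ => 1 / (n + 2 : ℝ)) atTop (nhds 0) := by
    convert (tendsto_one_div_add_atTop_nhds_zero_nat (𝕜 := ℝ)).comp (tendsto_add_atTop_nat 1)
      using 2 with n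
    simp only [Function.comp_apply, Nat.cast_add, Nat.cast_one]
    ring
  simpa using tendsto_const_nhds.sub h

theorem spectre_int_union_singleton :
    (∀ c : ℝ, c ∉ intR → spectre (intR ∪ {c}) = {0}) ∧
    spectre intR = intR ∧
    Tendsto (fun n : ℕ => EMetric.hausdorffEdist (intR ∪ {1 - 1 / (n + 2 : ℝ)}) intR)
      atTop (nhds 0) ∧
    ¬ Tendsto
      (fun n : ℕ => EMetric.hausdorffEdist (spectre (intR ∪ {1 - 1 / (n + 2 : ℝ)})) (spectre intR))
      atTop (nhds 0) := by
  unfold EMetric.hausdorffEdist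
  refine ⟨fun c => spectre_intR_union_singleton, spectre_intR, ?_, ?_⟩
  · simp_rw [hausdorffEDist_union_singleton]
    rw [← infEDist_zero_of_mem one_mem_intR]
    exact (continuous_infEDist.tendsto 1).comp tendsto_one_sub_one_div
  · simp_rw [spectre_intR_union_singleton (one_sub_one_div_notMem_intR _), spectre_intR,
      tendsto_const_nhds_iff]
    exact hausdorffEDist_singleton_ne_zero one_mem_intR one_ne_zero
end

section
/- Let (X,+) be an abelian group equipped with a translation-invariant metric d. Let A ⊆ X be a nonempty compact set, let (A_n) be a sequence of nonempty compact subsets of X converging to A in the Hausdorff distance, and suppose the sequence (S(A_n)) converges in the Hausdorff distance to a nonempty compact set B ⊆ X. Then B ⊆ S(A). -/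
open Metric Filter

lemma dist_add_add_le' {X : Type*} [AddCommGroup X] [MetricSpace X]
    (hd : ∀ x y z : X, dist (x + z) (y + z) = dist x y) (a b c e : X) :
    dist (a + c) (b + e) ≤ dist a b + dist c e := by
  calc dist (a + c) (b + e) ≤ dist (a + c) (b + c) + dist (b + c) (b + e) := dist_triangle _ _ _
    _ = dist a b + dist c e := by
        rw [hd a b c]
        congr 1
        rw [add_comm b c, add_comm b e, hd c e b]

lemma dist_neg_neg' {X : Type*} [AddCommGroup X] [MetricSpace X]
    (hd : ∀ x y z : X, dist (x + z) (y + z) = dist x y) (a b : X) :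
    dist (-a) (-b) = dist a b := by
  have := hd (-a) (-b) (a + b)
  simpa [add_comm, add_left_comm, dist_comm] using this.symm

lemma spectre_bounded {X : Type*} [AddCommGroup X] [MetricSpace X]
    (hd : ∀ x y z : X, dist (x + z) (y + z) = dist x y)
    (S : Set X) (hSne : S.Nonempty) (hSb : Bornology.IsBounded S) :
    Bornology.IsBounded (spectre S) := by
  obtain ⟨x0, hx0⟩ := hSne
  obtain ⟨r, hr⟩ := hSb.subset_closedBall x0
  apply Bornology.IsBounded.subset (Metric.isBounded_closedBall (x := (0 : X)) (r := r))
  intro z hz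
  rcases hz x0 hx0 with h | h
  · have h1 : dist (x0 + z) x0 ≤ r := hr h
    have h2 : dist z 0 = dist (x0 + z) x0 := by
      rw [add_comm x0 z]
      have := hd z 0 x0
      simpa using this.symm
    simpa [Metric.mem_closedBall, h2] using h1
  · have h1 : dist (x0 - z) x0 ≤ r := hr h
    have h2 : dist z 0 = dist (x0 - z) x0 := by
      have h3 := hd (x0 - z) x0 z
      simp only [sub_add_cancel] at h3
      rw [← h3, dist_comm]
      have h4 := hd 0 z x0
      simpa [add_comm] using h4.symm
    simpa [Metric.mem_closedBall, h2] using h1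

theorem limit_of_spectres_subset_spectre {X : Type*} [AddCommGroup X] [MetricSpace X]
    (hd : ∀ x y z : X, dist (x + z) (y + z) = dist x y)
    (A : Set X) (hAne : A.Nonempty) (hAc : IsCompact A)
    (Aseq : ℕ → Set X) (hne : ∀ n, (Aseq n).Nonempty) (hc : ∀ n, IsCompact (Aseq n))
    (hconv : Tendsto (fun n => hausdorffDist (Aseq n) A) atTop (nhds 0))
    (B : Set X) (hBne : B.Nonempty) (hBc : IsCompact B)
    (hSconv : Tendsto (fun n => hausdorffDist (spectre (Aseq n)) B) atTop (nhds 0)) :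
    B ⊆ spectre A := by
  intro z hz x hx
  -- basic facts
  have hspne : ∀ n, (spectre (Aseq n)).Nonempty := fun n =>
    ⟨0, fun y hy => Or.inl (by simpa using hy)⟩
  have hspb : ∀ n, Bornology.IsBounded (spectre (Aseq n)) := fun n =>
    spectre_bounded hd _ (hne n) (hc n).isBounded
  have hedistS : ∀ n, EMetric.hausdorffEdist B (spectre (Aseq n)) ≠ ⊤ := fun n =>
    Metric.hausdorffEdist_ne_top_of_nonempty_of_bounded hBne (hspne n) hBc.isBounded (hspb n)
  have hedistA : ∀ n, EMetric.hausdorffEdist (Aseq n) A ≠ ⊤ := fun n =>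
    Metric.hausdorffEdist_ne_top_of_nonempty_of_bounded (hne n) hAne (hc n).isBounded hAc.isBounded
  -- choose approximating points
  have hzex : ∀ n : ℕ, ∃ y ∈ spectre (Aseq n),
      dist z y < hausdorffDist (spectre (Aseq n)) B + 1 / (n + 1) := by
    intro n
    apply (Metric.infDist_lt_iff (hspne n)).mp
    have h1 : infDist z (spectre (Aseq n)) ≤ hausdorffDist B (spectre (Aseq n)) :=
      Metric.infDist_le_hausdorffDist_of_mem hz (hedistS n)
    rw [Metric.hausdorffDist_comm] at h1
    have : (0 : ℝ) < 1 / (n + 1) := by positivity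
    linarith
  have hxex : ∀ n : ℕ, ∃ y ∈ Aseq n,
      dist x y < hausdorffDist A (Aseq n) + 1 / (n + 1) := by
    intro n
    apply (Metric.infDist_lt_iff (hne n)).mp
    have h1 : infDist x (Aseq n) ≤ hausdorffDist A (Aseq n) :=
      Metric.infDist_le_hausdorffDist_of_mem hx
        (by rw [EMetric.hausdorffEdist_comm]; exact hedistA n)
    have : (0 : ℝ) < 1 / (n + 1) := by positivity
    linarith
  choose zs hzs hdzs using hzex
  choose xs hxs hdxs using hxex
  -- the bounding sequence tends to 0
  have hinv : Tendsto (fun n : ℕ => 1 / ((n : ℝ) + 1)) atTop (nhds 0) :=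
    tendsto_one_div_add_atTop_nhds_zero_nat
  have hconv' : Tendsto (fun n => hausdorffDist A (Aseq n)) atTop (nhds 0) := by
    simpa [Metric.hausdorffDist_comm] using hconv
  have hf : Tendsto (fun n => (hausdorffDist A (Aseq n) + 1 / (n + 1)) +
      (hausdorffDist (spectre (Aseq n)) B + 1 / (n + 1)) + hausdorffDist (Aseq n) A)
      atTop (nhds 0) := by
    have := ((hconv'.add hinv).add (hSconv.add hinv)).add hconv
    simpa using this
  -- key pointwise inequality
  have key : ∀ n, min (infDist (x + z) A) (infDist (x - z) A) ≤
      (hausdorffDist A (Aseq n) + 1 / (n + 1)) +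
      (hausdorffDist (spectre (Aseq n)) B + 1 / (n + 1)) + hausdorffDist (Aseq n) A := by
    intro n
    rcases hzs n (xs n) (hxs n) with h | h
    · refine le_trans (min_le_left _ _) ?_
      have h1 : infDist (x + z) A ≤ infDist (xs n + zs n) A + dist (x + z) (xs n + zs n) :=
        Metric.infDist_le_infDist_add_dist
      have h2 : infDist (xs n + zs n) A ≤ hausdorffDist (Aseq n) A :=
        Metric.infDist_le_hausdorffDist_of_mem h (hedistA n)
      have h3 : dist (x + z) (xs n + zs n) ≤ dist x (xs n) + dist z (zs n) :=
        dist_add_add_le' hd _ _ _ _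
      have := hdxs n
      have := hdzs n
      linarith
    · refine le_trans (min_le_right _ _) ?_
      have h1 : infDist (x - z) A ≤ infDist (xs n - zs n) A + dist (x - z) (xs n - zs n) :=
        Metric.infDist_le_infDist_add_dist
      have h2 : infDist (xs n - zs n) A ≤ hausdorffDist (Aseq n) A :=
        Metric.infDist_le_hausdorffDist_of_mem h (hedistA n)
      have h3 : dist (x - z) (xs n - zs n) ≤ dist x (xs n) + dist z (zs n) := by
        have := dist_add_add_le' hd x (xs n) (-z) (-zs n)
        rw [dist_neg_neg' hd] at this
        simpa [sub_eq_add_neg] using this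
      have := hdxs n
      have := hdzs n
      linarith
  -- pass to the limit
  have hmin : min (infDist (x + z) A) (infDist (x - z) A) ≤ 0 := ge_of_tendsto' hf key
  have h0 : (0 : ℝ) ≤ min (infDist (x + z) A) (infDist (x - z) A) :=
    le_min Metric.infDist_nonneg Metric.infDist_nonneg
  have heq : min (infDist (x + z) A) (infDist (x - z) A) = 0 := le_antisymm hmin h0
  rcases min_eq_iff.mp heq with ⟨h1, -⟩ | ⟨h1, -⟩
  · exact Or.inl ((hAc.isClosed.mem_iff_infDist_zero hAne).mpr h1)
  · exact Or.inr ((hAc.isClosed.mem_iff_infDist_zero hAne).mpr h1)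
end

section
/- Let (X,+) be an abelian group equipped with a translation-invariant metric d such that X is complete and locally compact. Then the spectre operator S is upper-semicontinuous at every nonempty compact set A ⊆ X: for every ε > 0 there exists δ > 0 such that for every nonempty compact set B ⊆ X with d_H(A,B) < δ one has S(B) ⊆ {x ∈ X : there exists a ∈ S(A) with d(x,a) < ε}. -/
open Metric

/-!
If the conclusion failed, there would be compact sets `Bₙ → A` in the Hausdorff metric and points
`zₙ ∈ S(Bₙ)` staying `ε` away from `S(A)`. Each `zₙ` is a difference of two points of `Bₙ`, hence
within `2 d_H(A, Bₙ)` of the compact set `A - A`, so a subsequence converges to some `w`. For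
`x ∈ A`, shadowing `x` by a point of `Bₙ` shows that `x + w` or `x - w` is arbitrarily close to `A`;
as `A` is closed, `w ∈ S(A)`, a contradiction.
-/

open Filter Topology Pointwise

namespace IsIsometricVAdd

variable {X : Type*} [AddCommGroup X] [PseudoMetricSpace X]

lemma of_dist_add_right (hd : ∀ x y z : X, dist (x + z) (y + z) = dist x y) :
    IsIsometricVAdd X X :=
  ⟨fun c => Isometry.of_dist_eq fun x y => by
    rw [vadd_eq_add, vadd_eq_add, add_comm c, add_comm c, hd]⟩

variable [IsIsometricVAdd X X]

lemma dist_add_add_le (a b c d : X) : dist (a + b) (c + d) ≤ dist a c + dist b d :=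
  calc dist (a + b) (c + d) ≤ dist (a + b) (c + b) + dist (c + b) (c + d) := dist_triangle _ _ _
    _ = dist a c + dist b d := by rw [dist_add_right, dist_add_left]

lemma dist_sub_sub_le (a b c d : X) : dist (a - b) (c - d) ≤ dist a c + dist b d := by
  simpa only [sub_eq_add_neg, dist_neg_neg] using dist_add_add_le a (-b) c (-d)

instance isTopologicalAddGroup : IsTopologicalAddGroup X where
  continuous_add := LipschitzWith.continuous (K := 2) <| .of_dist_le_mul fun p q =>
    calc dist (p.1 + p.2) (q.1 + q.2) ≤ dist p.1 q.1 + dist p.2 q.2 := dist_add_add_le _ _ _ _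
      _ ≤ (2 : NNReal) * dist p q := by
        rw [Prod.dist_eq, NNReal.coe_ofNat, two_mul]
        exact add_le_add (le_max_left _ _) (le_max_right _ _)
  continuous_neg := isometry_neg.continuous

end IsIsometricVAdd

lemma IsCompact.exists_dist_le_hausdorffDist {X : Type*} [PseudoMetricSpace X] {s t : Set X}
    (ht : IsCompact t) (hfin : hausdorffEDist s t ≠ ⊤) {x : X} (hx : x ∈ s) :
    ∃ y ∈ t, dist x y ≤ hausdorffDist s t := by
  obtain ⟨y, hy, hxy⟩ :=
    ht.exists_infDist_eq_dist (nonempty_of_hausdorffEDist_ne_top ⟨x, hx⟩ hfin) x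
  exact ⟨y, hy, hxy ▸ infDist_le_hausdorffDist_of_mem hx hfin⟩

lemma IsCompact.tendsto_subseq_of_dist_tendsto_zero {X : Type*} [PseudoMetricSpace X] {K : Set X}
    (hK : IsCompact K) {y z : ℕ → X} (hy : ∀ n, y n ∈ K)
    (hyz : Tendsto (fun n => dist (y n) (z n)) atTop (𝓝 0)) :
    ∃ w ∈ K, ∃ φ : ℕ → ℕ, StrictMono φ ∧ Tendsto (z ∘ φ) atTop (𝓝 w) := by
  obtain ⟨w, hw, φ, hφ, hyw⟩ := hK.tendsto_subseq hy
  exact ⟨w, hw, φ, hφ, hyw.congr_dist (hyz.comp hφ.tendsto_atTop)⟩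

section Spectre

variable {X : Type*} [AddCommGroup X] {A B : Set X}

lemma spectre_subset_sub (hB : B.Nonempty) : spectre B ⊆ B - B := by
  obtain ⟨x, hx⟩ := hB
  intro z hz
  rcases hz x hx with h | h
  · exact ⟨x + z, h, x, hx, add_sub_cancel_left x z⟩
  · exact ⟨x, hx, x - z, h, sub_sub_cancel x z⟩

variable [PseudoMetricSpace X] [IsIsometricVAdd X X]

lemma exists_mem_sub_dist_le_of_mem_sub (hA : IsCompact A) (hfin : hausdorffEDist A B ≠ ⊤)
    {z : X} (hz : z ∈ B - B) : ∃ y ∈ A - A, dist y z ≤ 2 * hausdorffDist A B := by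
  obtain ⟨p, hp, q, hq, rfl⟩ := hz
  rw [hausdorffEDist_comm] at hfin
  obtain ⟨a, ha, hpa⟩ := hA.exists_dist_le_hausdorffDist hfin hp
  obtain ⟨b, hb, hqb⟩ := hA.exists_dist_le_hausdorffDist hfin hq
  refine ⟨a - b, Set.sub_mem_sub ha hb, ?_⟩
  calc dist (a - b) (p - q) ≤ dist a p + dist b q := IsIsometricVAdd.dist_sub_sub_le a b p q
    _ ≤ 2 * hausdorffDist A B := by
      rw [dist_comm a, dist_comm b, hausdorffDist_comm]; linarith

lemma min_infDist_add_sub_le (hB : IsCompact B) (hfin : hausdorffEDist A B ≠ ⊤) {x : X}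
    (hx : x ∈ A) {z : X} (hz : z ∈ spectre B) (w : X) :
    min (infDist (x + w) A) (infDist (x - w) A) ≤ 2 * hausdorffDist A B + dist z w := by
  obtain ⟨x', hx'B, hxx'⟩ := hB.exists_dist_le_hausdorffDist hfin hx
  have hshadow : ∀ u v, v ∈ B → dist u v ≤ dist x x' + dist w z →
      infDist u A ≤ 2 * hausdorffDist A B + dist z w := fun u v hv huv => by
    have hvA : infDist v A ≤ hausdorffDist A B := by
      rw [hausdorffDist_comm]
      exact infDist_le_hausdorffDist_of_mem hv (by rwa [hausdorffEDist_comm])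
    have := infDist_le_infDist_add_dist (x := u) (y := v) (s := A)
    rw [dist_comm w z] at huv
    linarith
  rcases hz x' hx'B with h | h
  · exact (min_le_left _ _).trans
      (hshadow _ _ h (IsIsometricVAdd.dist_add_add_le x w x' z))
  · exact (min_le_right _ _).trans
      (hshadow _ _ h (IsIsometricVAdd.dist_sub_sub_le x w x' z))

lemma mem_spectre_of_tendsto {ι : Type*} {l : Filter ι} [l.NeBot] (hA : IsClosed A)
    {B : ι → Set X} {z : ι → X} {w : X} (hB : ∀ i, IsCompact (B i))
    (hfin : ∀ i, hausdorffEDist A (B i) ≠ ⊤)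
    (hAB : Tendsto (fun i => hausdorffDist A (B i)) l (𝓝 0))
    (hz : ∀ i, z i ∈ spectre (B i)) (hzw : Tendsto z l (𝓝 w)) : w ∈ spectre A := by
  intro x hx
  have hbound : Tendsto (fun i => 2 * hausdorffDist A (B i) + dist (z i) w) l (𝓝 0) := by
    simpa using (hAB.const_mul 2).add (tendsto_iff_dist_tendsto_zero.mp hzw)
  have hmin : min (infDist (x + w) A) (infDist (x - w) A) ≤ 0 :=
    ge_of_tendsto' hbound fun i => min_infDist_add_sub_le (hB i) (hfin i) hx (hz i) w
  simp only [hA.mem_iff_infDist_zero ⟨x, hx⟩]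
  rcases min_le_iff.mp hmin with h | h
  · exact .inl (le_antisymm h infDist_nonneg)
  · exact .inr (le_antisymm h infDist_nonneg)

end Spectre

theorem spectre_upperSemicontinuous_general {X : Type*} [AddCommGroup X] [MetricSpace X]
    (hd : ∀ x y z : X, dist (x + z) (y + z) = dist x y)
    (A : Set X) (hAne : A.Nonempty) (hAc : IsCompact A) :
    ∀ ε > 0, ∃ δ > 0, ∀ B : Set X, B.Nonempty → IsCompact B →
      hausdorffDist A B < δ →
      spectre B ⊆ {x : X | ∃ a ∈ spectre A, dist x a < ε} := by
  have := IsIsometricVAdd.of_dist_add_right hd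
  intro ε hε
  by_contra! hbad
  choose B hBne hBc hBA hBs using fun n : ℕ => hbad (1 / (n + 1)) Nat.one_div_pos_of_nat
  choose z hzB hzA using fun n => Set.not_subset.mp (hBs n)
  have hfin n : hausdorffEDist A (B n) ≠ ⊤ :=
    hausdorffEDist_ne_top_of_nonempty_of_bounded hAne (hBne n) hAc.isBounded (hBc n).isBounded
  have hAB : Tendsto (fun n => hausdorffDist A (B n)) atTop (𝓝 0) :=
    squeeze_zero (fun _ => hausdorffDist_nonneg) (fun n => (hBA n).le)
      tendsto_one_div_add_atTop_nhds_zero_nat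
  choose y hyA hyz using fun n =>
    exists_mem_sub_dist_le_of_mem_sub hAc (hfin n) (spectre_subset_sub (hBne n) (hzB n))
  have hAA : IsCompact (A - A) := by
    rw [sub_eq_add_neg]; exact hAc.add hAc.neg
  obtain ⟨w, -, φ, hφ, hzw⟩ := hAA.tendsto_subseq_of_dist_tendsto_zero hyA <|
    squeeze_zero (fun _ => dist_nonneg) hyz (by simpa using hAB.const_mul 2)
  have hw : w ∈ spectre A := mem_spectre_of_tendsto hAc.isClosed (fun n => hBc (φ n))
    (fun n => hfin (φ n)) (hAB.comp hφ.tendsto_atTop) (fun n => hzB (φ n)) hzw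
  obtain ⟨n, hn⟩ := (hzw.eventually (ball_mem_nhds w hε)).exists
  exact hzA (φ n) ⟨w, hw, hn⟩

theorem spectre_upperSemicontinuous {X : Type*} [AddCommGroup X] [MetricSpace X]
    [CompleteSpace X] [LocallyCompactSpace X]
    (hd : ∀ x y z : X, dist (x + z) (y + z) = dist x y)
    (A : Set X) (hAne : A.Nonempty) (hAc : IsCompact A) :
    ∀ ε > 0, ∃ δ > 0, ∀ B : Set X, B.Nonempty → IsCompact B →
      hausdorffDist A B < δ →
      spectre B ⊆ {x : X | ∃ a ∈ spectre A, dist x a < ε} :=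
  spectre_upperSemicontinuous_general hd A hAne hAc
end
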